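/- For the subfractal F_{X_A} of an HIFS satisfying the OSC, induced by an SFT with irreducible matrix: the upper box dimension satisfies dim̄_B(F_{X_A}) ≤ H, where H is the zero of the upper pressure function. -/

import Mathlib

open Filter Finset MeasureTheory Metric

/-- `applyWord f ω x = f_{ω_n} ∘ ⋯ ∘ f_{ω_1} (x)`. -/
def applyWord {X : Type*} {m : ℕ} (f : Fin m → X → X) {l : ℕ}
    (ω : Fin l → Fin m) (x : X) : X :=
  (List.ofFn ω).foldl (fun y a => f a y) x

/-- `coverNumber s r` is the smallest number of sets of diameter at most `r` needed to
cover `s` (or `0` by convention if no finite cover exists). -/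
noncomputable def coverNumber {X : Type*} [PseudoMetricSpace X] (s : Set X) (r : ℝ) : ℕ :=
  sInf {n : ℕ | ∃ C : Finset (Set X), C.card ≤ n ∧ (∀ E ∈ C, diam E ≤ r) ∧
    s ⊆ ⋃ E ∈ C, E}

/-- The upper box dimension `limsup_{r → 0⁺} log N_r(s) / (- log r)`. -/
noncomputable def upperBoxDim {X : Type*} [PseudoMetricSpace X] (s : Set X) : ℝ :=
  Filter.limsup (fun r : ℝ => Real.log (coverNumber s r) / (-Real.log r))
    (nhdsWithin 0 (Set.Ioi 0))


/-! Stop every coding sequence at the first level `n` where the contraction bound `∏ cbar`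
drops to `ρ = r / D` or below, where `D ≥ diam K`: the images `f_ω(K)` of these words form a
Moran cover of the subfractal by sets of diameter at most `r`. A word of level `n` in it has
contraction bound above `ρ * cmin`, so the bound `∑_{ω ∈ W n} cbar_ω ^ H ≤ L1` admits at most
`L1 * (ρ * cmin) ^ (-H)` of them, and only `O(log (1 / r))` levels occur. Hence
`N_r ≤ O(log (1 / r)) * r ^ (-H)`, which is below `r ^ (-(H + ε))` for small `r`. -/

section

open Real Topology

theorem applyWord_zero {X : Type*} {m : ℕ} (f : Fin m → X → X) (ω : Fin 0 → Fin m) (x : X) :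
    applyWord f ω x = x :=
  rfl

theorem applyWord_succ {X : Type*} {m : ℕ} (f : Fin m → X → X) {l : ℕ}
    (ω : Fin (l + 1) → Fin m) (x : X) :
    applyWord f ω x = applyWord f (fun i => ω i.succ) (f (ω 0) x) := by
  simp [applyWord, List.ofFn_succ]

section Contraction

variable {X : Type*} [PseudoMetricSpace X] {m : ℕ} {f : Fin m → X → X} {K : Set X}
  {cbar : Fin m → ℝ}

theorem dist_applyWord_le (hfK : ∀ i, Set.MapsTo (f i) K K) (hcbar : ∀ i, 0 ≤ cbar i)
    (hlip : ∀ i, ∀ x ∈ K, ∀ y ∈ K, dist (f i x) (f i y) ≤ cbar i * dist x y) :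
    ∀ {l : ℕ} (ω : Fin l → Fin m) {x y : X}, x ∈ K → y ∈ K →
      dist (applyWord f ω x) (applyWord f ω y) ≤ (∏ i, cbar (ω i)) * dist x y
  | 0, _, _, _, _, _ => by simp [applyWord_zero]
  | _ + 1, ω, x, y, hx, hy => by
    rw [applyWord_succ, applyWord_succ, Fin.prod_univ_succ, mul_comm (cbar (ω 0)), mul_assoc]
    exact (dist_applyWord_le hfK hcbar hlip _ (hfK _ hx) (hfK _ hy)).trans
      (mul_le_mul_of_nonneg_left (hlip _ _ hx _ hy) (prod_nonneg fun i _ => hcbar _))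

theorem diam_applyWord_image_le (hK : Bornology.IsBounded K) (hfK : ∀ i, Set.MapsTo (f i) K K)
    (hcbar : ∀ i, 0 ≤ cbar i)
    (hlip : ∀ i, ∀ x ∈ K, ∀ y ∈ K, dist (f i x) (f i y) ≤ cbar i * dist x y)
    {l : ℕ} (ω : Fin l → Fin m) :
    diam (applyWord f ω '' K) ≤ (∏ i, cbar (ω i)) * diam K := by
  have hprod : 0 ≤ ∏ i, cbar (ω i) := prod_nonneg fun i _ => hcbar _
  refine diam_le_of_forall_dist_le (mul_nonneg hprod diam_nonneg) ?_
  rintro _ ⟨x, hx, rfl⟩ _ ⟨y, hy, rfl⟩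
  exact (dist_applyWord_le hfK hcbar hlip ω hx hy).trans
    (mul_le_mul_of_nonneg_left (dist_le_diam_of_mem hK hx hy) hprod)

end Contraction

theorem coverNumber_le_card {X ι : Type*} [PseudoMetricSpace X] {s : Set X} {r : ℝ}
    (I : Finset ι) (E : ι → Set X) (hE : ∀ i ∈ I, diam (E i) ≤ r) (hs : s ⊆ ⋃ i ∈ I, E i) :
    coverNumber s r ≤ I.card := by
  classical
  refine Nat.sInf_le ⟨I.image E, card_image_le, ?_, ?_⟩
  · simp only [mem_image, forall_exists_index, and_imp]
    rintro _ i hi rfl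
    exact hE i hi
  · simpa [Set.biUnion_image] using hs

/-- Take the first `n` with `∏_{i<n} c i ≤ ρ`. -/
theorem exists_prod_range_mem_Ioc {c : ℕ → ℝ} {cmin q ρ : ℝ} (hcmin : 0 < cmin)
    (hlow : ∀ i, cmin ≤ c i) (hup : ∀ i, c i ≤ q) (hq : q < 1) (hρ0 : 0 < ρ) (hρ1 : ρ < 1) :
    ∃ n, 1 ≤ n ∧ ρ < q ^ (n - 1) ∧ ρ * cmin < ∏ i ∈ range n, c i ∧ ∏ i ∈ range n, c i ≤ ρ := by
  classical
  have hc0 : ∀ i, 0 ≤ c i := fun i => hcmin.le.trans (hlow i)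
  have hprod_le : ∀ n, ∏ i ∈ range n, c i ≤ q ^ n := fun n => by
    simpa using prod_le_prod (fun i _ => hc0 i) (fun i _ => hup i) (s := range n)
  have hex : ∃ n, ∏ i ∈ range n, c i ≤ ρ := by
    obtain ⟨n, hn⟩ := exists_pow_lt_of_lt_one hρ0 hq
    exact ⟨n, (hprod_le n).trans hn.le⟩
  obtain ⟨k, hk⟩ : ∃ k, Nat.find hex = k + 1 :=
    Nat.exists_eq_succ_of_ne_zero fun h0 => by
      have := Nat.find_spec hex
      rw [h0, prod_range_zero] at this
      linarith
  have hmin : ρ < ∏ i ∈ range k, c i := not_le.mp (Nat.find_min hex (by omega))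
  refine ⟨k + 1, le_add_self, by simpa using hmin.trans_le (hprod_le k), ?_,
    hk ▸ Nat.find_spec hex⟩
  rw [prod_range_succ]
  calc ρ * cmin < (∏ i ∈ range k, c i) * cmin := mul_lt_mul_of_pos_right hmin hcmin
    _ ≤ (∏ i ∈ range k, c i) * c k :=
      mul_le_mul_of_nonneg_left (hlow k) (prod_nonneg fun i _ => hc0 i)

theorem le_floor_log_div_log_of_lt_pow {ρ q : ℝ} {k : ℕ} (hρ : 0 < ρ) (hq0 : 0 < q) (hq1 : q < 1)
    (h : ρ < q ^ k) : k ≤ ⌊log ρ / log q⌋₊ := by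
  refine Nat.le_floor ?_
  rw [le_div_iff_of_neg (log_neg hq0 hq1), ← log_pow]
  exact (log_lt_log hρ h).le

theorem card_mul_rpow_le_sum_rpow {ι : Type*} {s t : Finset ι} (hts : t ⊆ s) {g : ι → ℝ}
    (hg : ∀ i ∈ s, 0 ≤ g i) {a H : ℝ} (ha : 0 ≤ a) (hH : 0 ≤ H) (hle : ∀ i ∈ t, a ≤ g i) :
    t.card * a ^ H ≤ ∑ i ∈ s, g i ^ H := by
  rw [← nsmul_eq_mul]
  calc t.card • a ^ H ≤ ∑ i ∈ t, g i ^ H :=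
        card_nsmul_le_sum _ _ _ fun i hi => rpow_le_rpow ha (hle i hi) hH
    _ ≤ ∑ i ∈ s, g i ^ H :=
        sum_le_sum_of_subset_of_nonneg hts fun i hi _ => rpow_nonneg (hg i hi) H

theorem eventually_mul_log_add_le_rpow_neg (a b : ℝ) {ε : ℝ} (hε : 0 < ε) :
    ∀ᶠ r in 𝓝[>] (0 : ℝ), a * log r + b ≤ r ^ (-ε) := by
  have hid : (fun u : ℝ => u) =o[atTop] fun u => exp (ε * u) := by
    simpa using isLittleO_pow_exp_pos_mul_atTop 1 hε
  have hlin : (fun u : ℝ => -a * u + b) =o[atTop] fun u => exp (ε * u) :=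
    ((Asymptotics.isBigO_const_mul_self (-a) (fun u => u) atTop).add
      (Asymptotics.isLittleO_const_id_atTop b).isBigO).trans_isLittleO hid
  filter_upwards [(tendsto_neg_atBot_atTop.comp tendsto_log_nhdsGT_zero).eventually
    (hlin.bound one_pos), self_mem_nhdsWithin] with r hr hr0
  rw [rpow_def_of_pos hr0]
  simp only [Function.comp_apply, one_mul, norm_eq_abs, abs_exp] at hr
  calc a * log r + b = -a * -log r + b := by ring
    _ ≤ exp (ε * -log r) := (le_abs_self _).trans hr
    _ = exp (log r * -ε) := by ring_nf

theorem upperBoxDim_le_of_forall_coverNumber_le_rpow {X : Type*} [PseudoMetricSpace X]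
    {s : Set X} {H : ℝ} (hH : 0 ≤ H)
    (h : ∀ ε > 0, ∀ᶠ r in 𝓝[>] (0 : ℝ), (coverNumber s r : ℝ) ≤ r ^ (-(H + ε))) :
    upperBoxDim s ≤ H := by
  have hsmall : ∀ᶠ r in 𝓝[>] (0 : ℝ), r ∈ Set.Ioo 0 1 := Ioo_mem_nhdsGT one_pos
  have hcobdd : IsCoboundedUnder (· ≤ ·) (𝓝[>] (0 : ℝ))
      fun r => log (coverNumber s r) / -log r := by
    refine isCoboundedUnder_le_of_eventually_le _ (x := 0) ?_
    filter_upwards [hsmall] with r hr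
    exact div_nonneg (log_natCast_nonneg _) (neg_nonneg.2 (log_nonpos hr.1.le hr.2.le))
  refine le_of_forall_pos_le_add fun ε hε => limsup_le_of_le hcobdd ?_
  filter_upwards [hsmall, h ε hε] with r ⟨hr0, hr1⟩ hN
  rw [div_le_iff₀ (neg_pos.2 (log_neg hr0 hr1))]
  rcases (coverNumber s r).eq_zero_or_pos with h0 | hpos
  · rw [h0, Nat.cast_zero, log_zero]
    exact mul_nonneg (by positivity) (neg_nonneg.2 (log_nonpos hr0.le hr1.le))
  · calc log (coverNumber s r) ≤ log (r ^ (-(H + ε))) := log_le_log (by exact_mod_cast hpos) hN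
      _ = (H + ε) * -log r := by rw [log_rpow hr0]; ring

open Classical in
/-- Level `n` of the Moran cover at scale `ρ`. -/
noncomputable def moranCut {m : ℕ} (W : ∀ n : ℕ, Finset (Fin n → Fin m)) (cbar : Fin m → ℝ)
    (cmin ρ : ℝ) (n : ℕ) : Finset (Fin n → Fin m) :=
  (W n).filter fun ω => ∏ i, cbar (ω i) ∈ Set.Ioc (ρ * cmin) ρ

section MoranCover

variable {X : Type*} [PseudoMetricSpace X] {m : ℕ} {f : Fin m → X → X} {K : Set X}
  {cbar : Fin m → ℝ} {W : ∀ n : ℕ, Finset (Fin n → Fin m)} {S : Set X} {cmin q ρ D : ℝ}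

theorem coverNumber_le_sum_card_moranCut (hK : Bornology.IsBounded K)
    (hfK : ∀ i, Set.MapsTo (f i) K K)
    (hlip : ∀ i, ∀ x ∈ K, ∀ y ∈ K, dist (f i x) (f i y) ≤ cbar i * dist x y)
    (hcmin : 0 < cmin) (hlow : ∀ i, cmin ≤ cbar i) (hup : ∀ i, cbar i ≤ q) (hq0 : 0 < q)
    (hq : q < 1)
    (hS : ∀ y ∈ S, ∃ x : ℕ → Fin m,
      ∀ n, (fun i : Fin n => x i) ∈ W n ∧ y ∈ applyWord f (fun i : Fin n => x i) '' K)
    (hρ0 : 0 < ρ) (hρ1 : ρ < 1) (hD : diam K ≤ D) :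
    coverNumber S (ρ * D) ≤
      ∑ n ∈ Icc 1 (⌊log ρ / log q⌋₊ + 1), (moranCut W cbar cmin ρ n).card := by
  have hcbar : ∀ i, 0 ≤ cbar i := fun i => hcmin.le.trans (hlow i)
  rw [← card_sigma]
  refine coverNumber_le_card _ (fun p => applyWord f p.2 '' K) ?_ ?_
  · rintro ⟨n, ω⟩ hω
    have hω : ∏ i, cbar (ω i) ≤ ρ := (mem_filter.1 (mem_sigma.1 hω).2).2.2
    exact (diam_applyWord_image_le hK hfK hcbar hlip ω).trans
      (mul_le_mul hω hD diam_nonneg hρ0.le)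
  · intro y hy
    obtain ⟨x, hx⟩ := hS y hy
    obtain ⟨n, hn1, hnq, hprod⟩ := exists_prod_range_mem_Ioc (c := fun i => cbar (x i))
      hcmin (fun i => hlow _) (fun i => hup _) hq hρ0 hρ1
    rw [← Fin.prod_univ_eq_prod_range] at hprod
    have hnN := le_floor_log_div_log_of_lt_pow hρ0 hq0 hq hnq
    refine Set.mem_biUnion (x := ⟨n, fun i : Fin n => x i⟩) ?_ (hx n).2
    simp only [coe_sigma, Set.mem_sigma_iff, coe_Icc, Set.mem_Icc, moranCut, mem_coe, mem_filter]
    exact ⟨⟨hn1, by omega⟩, (hx n).1, hprod⟩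

/-- Each word of a level carries `H`-mass more than `(ρ * cmin) ^ H`, so a level has at most
`L1 * (ρ * cmin) ^ (-H)` words; here `ρ = r / D`. -/
theorem coverNumber_le_log_div_log_mul_rpow (hK : Bornology.IsBounded K)
    (hfK : ∀ i, Set.MapsTo (f i) K K)
    (hlip : ∀ i, ∀ x ∈ K, ∀ y ∈ K, dist (f i x) (f i y) ≤ cbar i * dist x y)
    (hcmin : 0 < cmin) (hlow : ∀ i, cmin ≤ cbar i) (hup : ∀ i, cbar i ≤ q) (hq0 : 0 < q)
    (hq : q < 1)
    (hS : ∀ y ∈ S, ∃ x : ℕ → Fin m,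
      ∀ n, (fun i : Fin n => x i) ∈ W n ∧ y ∈ applyWord f (fun i : Fin n => x i) '' K)
    {r : ℝ} (hr0 : 0 < r) (hrD : r < D) (hD : diam K ≤ D) {H L1 : ℝ} (hH : 0 ≤ H)
    (hL1 : ∀ n : ℕ, 1 ≤ n → ∑ ω ∈ W n, (∏ i, cbar (ω i)) ^ H ≤ L1) (hL1₀ : 0 ≤ L1) :
    (coverNumber S r : ℝ) ≤ (log (r / D) / log q + 1) * (L1 * (r / D * cmin) ^ (-H)) := by
  set ρ := r / D
  have hD0 : 0 < D := hr0.trans hrD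
  have hρ0 : 0 < ρ := div_pos hr0 hD0
  have hρ1 : ρ < 1 := (div_lt_one hD0).2 hrD
  have hlevel : ∀ n ∈ Icc 1 (⌊log ρ / log q⌋₊ + 1),
      ((moranCut W cbar cmin ρ n).card : ℝ) ≤ L1 * (ρ * cmin) ^ (-H) := by
    intro n hn
    rw [rpow_neg (by positivity), ← div_eq_mul_inv, le_div_iff₀ (by positivity)]
    refine (card_mul_rpow_le_sum_rpow (filter_subset _ _)
      (fun ω _ => prod_nonneg fun i _ => hcmin.le.trans (hlow _)) (by positivity) hH
      fun ω hω => (mem_filter.1 hω).2.1.le).trans (hL1 n (mem_Icc.1 hn).1)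
  calc (coverNumber S r : ℝ) = coverNumber S (ρ * D) := by rw [div_mul_cancel₀ _ hD0.ne']
    _ ≤ ∑ n ∈ Icc 1 (⌊log ρ / log q⌋₊ + 1), ((moranCut W cbar cmin ρ n).card : ℝ) := by
        exact_mod_cast
          coverNumber_le_sum_card_moranCut hK hfK hlip hcmin hlow hup hq0 hq hS hρ0 hρ1 hD
    _ ≤ (Icc 1 (⌊log ρ / log q⌋₊ + 1)).card • (L1 * (ρ * cmin) ^ (-H)) :=
        sum_le_card_nsmul _ _ _ hlevel
    _ = (⌊log ρ / log q⌋₊ + 1) * (L1 * (ρ * cmin) ^ (-H)) := by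
        rw [Nat.card_Icc, nsmul_eq_mul]
        push_cast
        ring
    _ ≤ (log ρ / log q + 1) * (L1 * (ρ * cmin) ^ (-H)) := by
        gcongr
        exact Nat.floor_le (div_nonneg_of_nonpos (log_neg hρ0 hρ1).le (log_neg hq0 hq).le)

end MoranCover

end

theorem subfractal_upper_box_dim_bound_general
    {d : ℕ} (m : ℕ) (hm : 0 < m)
    (K : Set (EuclideanSpace ℝ (Fin d))) (hK : IsCompact K)
    (f : Fin m → EuclideanSpace ℝ (Fin d) → EuclideanSpace ℝ (Fin d))
    (hfK : ∀ i, Set.MapsTo (f i) K K)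
    (c cbar : Fin m → ℝ) (hc : ∀ i, 0 < c i ∧ c i ≤ cbar i ∧ cbar i < 1)
    (hlip : ∀ i, ∀ x ∈ K, ∀ y ∈ K,
      c i * dist x y ≤ dist (f i x) (f i y) ∧ dist (f i x) (f i y) ≤ cbar i * dist x y)
    -- the SFT and its subfractal, given by the coding map `π`
    (W : ∀ n : ℕ, Finset (Fin n → Fin m))
    (π : {x : ℕ → Fin m // ∀ n : ℕ, (fun i : Fin n => x i.1) ∈ W n} →
      EuclideanSpace ℝ (Fin d))
    (hπ : ∀ x (l : ℕ), π x ∈ applyWord f (fun i : Fin l => x.1 i.1) '' K)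
    -- the upper topological pressure function, its zero `H`, and the uniform bound `L₁`
    (H : ℝ) (hH0 : 0 ≤ H)
    (L1 : ℝ) (hL1pos : 0 < L1)
    (hL1 : ∀ n : ℕ, 1 ≤ n → ∑ ω ∈ W n, (∏ i, cbar (ω i)) ^ H ≤ L1) :
    upperBoxDim (Set.range π) ≤ H := by
  have : Nonempty (Fin m) := ⟨⟨0, hm⟩⟩
  obtain ⟨i₀, hi₀⟩ := Finite.exists_min cbar
  obtain ⟨i₁, hi₁⟩ := Finite.exists_max cbar
  have hcbar_pos : ∀ i, 0 < cbar i := fun i => (hc i).1.trans_le (hc i).2.1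
  have hcmin : 0 < cbar i₀ := hcbar_pos i₀
  -- `diam K` itself may vanish
  set D := diam K + 1
  have hD : 1 ≤ D := le_add_of_nonneg_left diam_nonneg
  set C := L1 * (cbar i₀ / D) ^ (-H)
  refine upperBoxDim_le_of_forall_coverNumber_le_rpow hH0 fun ε hε => ?_
  filter_upwards [Ioo_mem_nhdsGT one_pos, eventually_mul_log_add_le_rpow_neg
    (C / Real.log (cbar i₁)) (C * (1 - Real.log D / Real.log (cbar i₁))) hε]
    with r ⟨hr0, hr1⟩ hlog
  calc (coverNumber (Set.range π) r : ℝ)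
      ≤ (Real.log (r / D) / Real.log (cbar i₁) + 1) * (L1 * (r / D * cbar i₀) ^ (-H)) :=
        coverNumber_le_log_div_log_mul_rpow hK.isBounded hfK
          (fun i x hx y hy => (hlip i x hx y hy).2) hcmin hi₀ hi₁ (hcbar_pos i₁)
          (hc i₁).2.2 (by rintro _ ⟨x, rfl⟩; exact ⟨x.1, fun n => ⟨x.2 n, hπ x n⟩⟩) hr0
          (hr1.trans_le hD) (le_add_of_nonneg_right zero_le_one) hH0 hL1 hL1pos.le
    _ = (C / Real.log (cbar i₁) * Real.log r + C * (1 - Real.log D / Real.log (cbar i₁)))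
          * r ^ (-H) := by
        rw [Real.log_div hr0.ne' (zero_lt_one.trans_le hD).ne',
          show r / D * cbar i₀ = r * (cbar i₀ / D) by ring, Real.mul_rpow hr0.le (by positivity)]
        ring
    _ ≤ r ^ (-ε) * r ^ (-H) := by gcongr
    _ = r ^ (-(H + ε)) := by rw [← Real.rpow_add hr0]; ring_nf

/-- For the subfractal `F_{X_A}` of an HIFS satisfying the OSC, induced by
an SFT with irreducible matrix, the upper box dimension satisfies
`dim̄_B (F_{X_A}) ≤ H`, where `H` is the zero of the upper pressure function. -/
theorem subfractal_upper_box_dim_bound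
    {d : ℕ} (m : ℕ) (hm : 0 < m)
    (K : Set (EuclideanSpace ℝ (Fin d))) (hK : IsCompact K) (hKne : K.Nonempty)
    (f : Fin m → EuclideanSpace ℝ (Fin d) → EuclideanSpace ℝ (Fin d))
    (hfK : ∀ i, Set.MapsTo (f i) K K)
    (c cbar : Fin m → ℝ) (hc : ∀ i, 0 < c i ∧ c i ≤ cbar i ∧ cbar i < 1)
    (hlip : ∀ i, ∀ x ∈ K, ∀ y ∈ K,
      c i * dist x y ≤ dist (f i x) (f i y) ∧ dist (f i x) (f i y) ≤ cbar i * dist x y)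
    -- the open set condition
    (U : Set (EuclideanSpace ℝ (Fin d))) (hUopen : IsOpen U) (hUne : U.Nonempty)
    (hUK : U ⊆ K) (hUinv : ∀ i, f i '' U ⊆ U)
    (hUdisj : ∀ i j, i ≠ j → (f i '' U) ∩ (f j '' U) = ∅)
    -- the SFT and its subfractal, given by the coding map `π`
    (W : ∀ n : ℕ, Finset (Fin n → Fin m)) (hWne : ∀ n, (W n).Nonempty)
    (π : {x : ℕ → Fin m // ∀ n : ℕ, (fun i : Fin n => x i.1) ∈ W n} →
      EuclideanSpace ℝ (Fin d))
    (hπ : ∀ x (l : ℕ), π x ∈ applyWord f (fun i : Fin l => x.1 i.1) '' K)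
    -- the upper topological pressure function, its zero `H`, and the uniform bound `L₁`
    (Pbar : ℝ → ℝ)
    (hPbar : ∀ t : ℝ, Tendsto
      (fun n : ℕ => (1 / (n : ℝ)) * Real.log (∑ ω ∈ W n, (∏ i, cbar (ω i)) ^ t))
      atTop (nhds (Pbar t)))
    (H : ℝ) (hH0 : 0 ≤ H) (hHzero : Pbar H = 0)
    (L1 : ℝ) (hL1pos : 0 < L1)
    (hL1 : ∀ n : ℕ, 1 ≤ n → ∑ ω ∈ W n, (∏ i, cbar (ω i)) ^ H ≤ L1) :
    upperBoxDim (Set.range π) ≤ H :=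
  subfractal_upper_box_dim_bound_general m hm K hK f hfK c cbar hc hlip W π hπ H hH0 L1 hL1pos hL1
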